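/- arXiv:2405.12938 — 2 statements merged into one kernel-verified Lean document; each statement's English description precedes it below -/
import Mathlib

section
/- If s, e, i, r solve the homogeneous SEIR ODE system with nonnegative parameters σ, φₑ, φᵢ, βₑ, βᵢ ≥ 0 and 0 ≤ 1 - A/(n̄+n₀), and the initial data satisfy s(0), e(0), i(0), r(0) ≥ 0, then s(t), e(t), i(t), r(t) remain nonnegative for all t ≥ 0. -/
/-!
Write the system as `x' = M(t) x` with `x = (s, e, i, r)`, moving the nonlinearity into the
coefficients: `M(t)` has off-diagonal entries `c βᵢ s(t)`, `σ`, `φₑ`, `φᵢ` and zeros, so it is a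
Metzler matrix as soon as `s(t) ≥ 0`, and this holds because `s' = -c (βₑ e + βᵢ i) s` is a scalar
linear equation. For a linear system with continuous Metzler coefficients, on `[0, T]` the
perturbation `x + ε e^{Lt} 𝟙`, with `L` above every row sum of `M(t)`, cannot leave the open
positive orthant: at the first time a component vanishes its derivative would be at least
`E (L - row sum) > 0`, where `E = ε e^{Lt}`. Letting `ε → 0` gives `x ≥ 0`.
-/

open Set Filter Topology Matrix

theorem HasDerivWithinAt.nonpos_of_eventually_le {f : ℝ → ℝ} {f' x : ℝ}
    (hf : HasDerivWithinAt f f' (Iic x) x) (h : ∀ᶠ y in 𝓝[<] x, f x ≤ f y) : f' ≤ 0 := by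
  have hslope := hasDerivWithinAt_iff_tendsto_slope.mp hf
  rw [Iic_sdiff_right] at hslope
  refine le_of_tendsto hslope ?_
  filter_upwards [h, self_mem_nhdsWithin] with y hy hyx
  rw [slope_def_field]
  exact div_nonpos_of_nonneg_of_nonpos (sub_nonneg.mpr hy) (sub_nonpos.mpr hyx.le)

theorem pos_of_deriv_pos_on_boundary {ι : Type*} [Finite ι] {z z' : ℝ → ι → ℝ} {a b : ℝ}
    (hc : ContinuousOn z (Icc a b))
    (hz : ∀ t ∈ Ioc a b, HasDerivWithinAt z (z' t) (Iic t) t)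
    (ha : ∀ j, 0 < z a j)
    (hinward : ∀ t ∈ Ioc a b, 0 ≤ z t → ∀ j, z t j = 0 → 0 < z' t j) :
    ∀ t ∈ Icc a b, ∀ j, 0 < z t j := by
  by_contra! hexit
  set Z := Icc a b ∩ z ⁻¹' ⋃ j, {v | v j ≤ 0}
  have hZ : IsCompact Z := isCompact_Icc.of_isClosed_subset
    (hc.preimage_isClosed_of_isClosed isClosed_Icc <| isClosed_iUnion_of_finite fun j =>
      isClosed_le (continuous_apply j) continuous_const) inter_subset_left
  obtain ⟨t, ht, j, hj⟩ := hexit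
  obtain ⟨τ, ⟨hτ, hτZ⟩, hτ_least⟩ := hZ.exists_isLeast ⟨t, ht, mem_iUnion.mpr ⟨j, hj⟩⟩
  have hpos_before : ∀ u ∈ Ico a τ, ∀ k, 0 < z u k := fun u hu k => by
    by_contra! hk
    exact (hτ_least ⟨⟨hu.1, hu.2.le.trans hτ.2⟩, mem_iUnion.mpr ⟨k, hk⟩⟩).not_gt hu.2
  obtain ⟨j, hj⟩ := mem_iUnion.mp hτZ
  have haτ : a < τ := hτ.1.lt_of_ne fun h => (ha j).not_ge (h ▸ hj)
  have hτ' : τ ∈ Ioc a b := ⟨haτ, hτ.2⟩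
  have hz_comp : ∀ k, HasDerivWithinAt (fun t => z t k) (z' τ k) (Iic τ) τ :=
    hasDerivWithinAt_pi.mp (hz τ hτ')
  have hnear : ∀ᶠ u in 𝓝[<] τ, u ∈ Ico a τ :=
    mem_of_superset (Ioo_mem_nhdsLT haτ) Ioo_subset_Ico_self
  have hzτ : 0 ≤ z τ := fun k =>
    ge_of_tendsto ((hz_comp k).continuousWithinAt.tendsto.mono_left
      (nhdsWithin_mono _ Iio_subset_Iic_self)) (hnear.mono fun u hu => (hpos_before u hu k).le)
  have hzj : z τ j = 0 := le_antisymm hj (hzτ j)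
  refine (hinward τ hτ' hzτ j hzj).not_ge ((hz_comp j).nonpos_of_eventually_le ?_)
  exact hnear.mono fun u hu => hzj ▸ (hpos_before u hu j).le

def Matrix.IsMetzler {ι R : Type*} [Zero R] [LE R] (A : Matrix ι ι R) : Prop :=
  ∀ j k, j ≠ k → 0 ≤ A j k

theorem Matrix.IsMetzler.mulVec_apply_le {ι R : Type*} [Fintype ι] [Semiring R] [PartialOrder R]
    [IsOrderedRing R] {A : Matrix ι ι R} (hA : A.IsMetzler) {v w : ι → R} (hvw : v ≤ w) {j : ι}
    (hj : v j = w j) : (A *ᵥ v) j ≤ (A *ᵥ w) j := by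
  refine Finset.sum_le_sum fun k _ => ?_
  rcases eq_or_ne j k with rfl | hjk
  · rw [hj]
  · exact mul_le_mul_of_nonneg_left (hvw k) (hA j k hjk)

theorem nonneg_of_hasDerivAt_mulVec_of_isMetzler {ι : Type*} [Fintype ι]
    {M : ℝ → Matrix ι ι ℝ} {x : ℝ → ι → ℝ} (hM : Continuous M)
    (hx : ∀ t, HasDerivAt x (M t *ᵥ x t) t) (hM_metzler : ∀ t, 0 ≤ t → (M t).IsMetzler)
    (h0 : 0 ≤ x 0) : ∀ t, 0 ≤ t → 0 ≤ x t := by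
  intro T hT j
  obtain ⟨C, hC⟩ := (isCompact_Icc (a := 0) (b := T)).exists_bound_of_continuousOn
    (hM.matrix_mulVec (continuous_const (y := (1 : ι → ℝ)))).continuousOn
  set L := C + 1
  have hrow : ∀ t ∈ Icc 0 T, ∀ k, (M t *ᵥ 1) k < L := fun t ht k =>
    ((le_abs_self _).trans ((norm_le_pi_norm _ k).trans (hC t ht))).trans_lt (lt_add_one C)
  have hperturbed : ∀ ε > 0, 0 < x T j + ε * Real.exp (T * L) := by
    intro ε hε
    set z : ℝ → ι → ℝ := fun t => x t + (ε * Real.exp (t * L)) • 1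
    have hz : ∀ t, HasDerivAt z (M t *ᵥ x t + (ε * (Real.exp (t * L) * L)) • 1) t := fun t =>
      (hx t).add (((hasDerivAt_mul_const L).exp.const_mul ε).smul_const (1 : ι → ℝ))
    have hz0 : ∀ k, 0 < z 0 k := fun k => by simpa [z] using add_pos_of_nonneg_of_pos (h0 k) hε
    suffices 0 < z T j by simpa [z] using this
    refine pos_of_deriv_pos_on_boundary (fun t _ => (hz t).continuousAt.continuousWithinAt)
      (fun t _ => (hz t).hasDerivWithinAt) hz0 ?_ T ⟨hT, le_rfl⟩ j
    intro t ht hzt k hzk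
    set E := ε * Real.exp (t * L)
    have hE : 0 < E := by positivity
    have hxk : x t k = -E := by simpa [z, add_eq_zero_iff_eq_neg] using hzk
    have hlow : (-E) • 1 ≤ x t := fun l => by
      simpa [z, E, neg_le_iff_add_nonneg, add_comm] using hzt l
    have hcmp : (M t *ᵥ ((-E) • 1)) k ≤ (M t *ᵥ x t) k :=
      (hM_metzler t ht.1.le).mulVec_apply_le (j := k) hlow (by simp [hxk, E])
    have hgap := mul_lt_mul_of_pos_left (hrow t (Ioc_subset_Icc_self ht) k) hE
    rw [Matrix.mulVec_smul] at hcmp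
    simp only [Pi.add_apply, Pi.smul_apply, smul_eq_mul, Pi.one_apply, mul_one, ← mul_assoc]
      at hcmp ⊢
    linarith
  have hlim : Tendsto (fun ε => x T j + ε * Real.exp (T * L)) (𝓝[>] 0) (𝓝 (x T j)) :=
    tendsto_nhdsWithin_of_tendsto_nhds <|
      (by fun_prop : Continuous fun ε => x T j + ε * Real.exp (T * L)).tendsto' 0 _ (by simp)
  exact ge_of_tendsto hlim (eventually_nhdsWithin_of_forall fun ε hε => (hperturbed ε hε).le)

theorem nonneg_of_hasDerivAt_eq_mul_self {a f : ℝ → ℝ} (ha : Continuous a)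
    (hf : ∀ t, HasDerivAt f (a t * f t) t) (h0 : 0 ≤ f 0) : ∀ t, 0 ≤ t → 0 ≤ f t := by
  have := nonneg_of_hasDerivAt_mulVec_of_isMetzler (M := fun t => Matrix.of fun _ _ : Unit => a t)
    (x := fun t _ => f t) (continuous_matrix fun _ _ => ha)
    (fun t => hasDerivAt_pi.2 fun _ => by simpa [mulVec, dotProduct] using hf t)
    (fun _ _ j k hjk => absurd (Subsingleton.elim j k) hjk) (fun _ => h0)
  exact fun t ht => this t ht ()

def seirMatrix (c βe βi σ φe φi S E I : ℝ) : Matrix (Fin 4) (Fin 4) ℝ :=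
  !![-(c * (βe * E + βi * I)), 0, 0, 0;
     0, c * βe * S - (σ + φe), c * βi * S, 0;
     0, σ, -φi, 0;
     0, φe, φi, 0]

theorem seirMatrix_mulVec (c βe βi σ φe φi S E I R : ℝ) :
    seirMatrix c βe βi σ φe φi S E I *ᵥ ![S, E, I, R] =
      ![-(c * S * (βe * E + βi * I)), c * S * (βe * E + βi * I) - (σ + φe) * E,
        σ * E - φi * I, φi * I + φe * E] := by
  ext j
  fin_cases j <;> simp [seirMatrix, mulVec, dotProduct, Fin.sum_univ_four] <;> ring

theorem seirMatrix_isMetzler {c βi σ φe φi S : ℝ} (βe E I : ℝ) (hc : 0 ≤ c) (hβi : 0 ≤ βi)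
    (hσ : 0 ≤ σ) (hφe : 0 ≤ φe) (hφi : 0 ≤ φi) (hS : 0 ≤ S) :
    (seirMatrix c βe βi σ φe φi S E I).IsMetzler := by
  intro j k hjk
  fin_cases j <;> fin_cases k <;> simp [seirMatrix] at hjk ⊢ <;> positivity

theorem Continuous.seirMatrix {X : Type*} [TopologicalSpace X] {S E I : X → ℝ}
    (c βe βi σ φe φi : ℝ) (hS : Continuous S) (hE : Continuous E) (hI : Continuous I) :
    Continuous fun x => seirMatrix c βe βi σ φe φi (S x) (E x) (I x) :=
  continuous_matrix fun j k => by
    fin_cases j <;> fin_cases k <;> simp [_root_.seirMatrix] <;> fun_prop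

theorem seir_ode_nonneg_general
    (s e i r : ℝ → ℝ) (A n₀ nbar βe βi σ φe φi : ℝ)
    (hσ : 0 ≤ σ) (hφe : 0 ≤ φe) (hφi : 0 ≤ φi) (hβi : 0 ≤ βi)
    (hc : 0 ≤ 1 - A / (nbar + n₀))
    (hs : ∀ t, HasDerivAt s (-((1 - A / (nbar + n₀)) * s t * (βe * e t + βi * i t))) t)
    (he : ∀ t, HasDerivAt e ((1 - A / (nbar + n₀)) * s t * (βe * e t + βi * i t) - (σ + φe) * e t) t)
    (hi : ∀ t, HasDerivAt i (σ * e t - φi * i t) t)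
    (hr : ∀ t, HasDerivAt r (φi * i t + φe * e t) t)
    (hs0 : 0 ≤ s 0) (he0 : 0 ≤ e 0) (hi0 : 0 ≤ i 0) (hr0 : 0 ≤ r 0) :
    ∀ t : ℝ, 0 ≤ t → 0 ≤ s t ∧ 0 ≤ e t ∧ 0 ≤ i t ∧ 0 ≤ r t := by
  set c := 1 - A / (nbar + n₀)
  have hs_cont : Continuous s := continuous_iff_continuousAt.2 fun t => (hs t).continuousAt
  have he_cont : Continuous e := continuous_iff_continuousAt.2 fun t => (he t).continuousAt
  have hi_cont : Continuous i := continuous_iff_continuousAt.2 fun t => (hi t).continuousAt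
  have hs_nonneg : ∀ t, 0 ≤ t → 0 ≤ s t :=
    nonneg_of_hasDerivAt_eq_mul_self (a := fun t => -(c * (βe * e t + βi * i t))) (by fun_prop)
      (fun t => by convert hs t using 1; ring) hs0
  have hx : ∀ t, HasDerivAt (fun t => ![s t, e t, i t, r t])
      (seirMatrix c βe βi σ φe φi (s t) (e t) (i t) *ᵥ ![s t, e t, i t, r t]) t := fun t => by
    rw [seirMatrix_mulVec]
    exact hasDerivAt_pi.2 fun j => by fin_cases j <;> simp [hs t, he t, hi t, hr t]
  intro t ht
  have hx_nonneg := nonneg_of_hasDerivAt_mulVec_of_isMetzler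
    (hs_cont.seirMatrix c βe βi σ φe φi he_cont hi_cont) hx
    (fun t ht => seirMatrix_isMetzler βe (e t) (i t) hc hβi hσ hφe hφi (hs_nonneg t ht))
    (by simp [Pi.le_def, Fin.forall_fin_succ, hs0, he0, hi0, hr0]) t ht
  exact ⟨hx_nonneg 0, hx_nonneg 1, hx_nonneg 2, hx_nonneg 3⟩

theorem seir_ode_nonneg
    (s e i r : ℝ → ℝ) (A n₀ nbar βe βi σ φe φi : ℝ)
    (hσ : 0 ≤ σ) (hφe : 0 ≤ φe) (hφi : 0 ≤ φi) (hβe : 0 ≤ βe) (hβi : 0 ≤ βi)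
    (hc : 0 ≤ 1 - A / (nbar + n₀))
    (hs : ∀ t, HasDerivAt s (-((1 - A / (nbar + n₀)) * s t * (βe * e t + βi * i t))) t)
    (he : ∀ t, HasDerivAt e ((1 - A / (nbar + n₀)) * s t * (βe * e t + βi * i t) - (σ + φe) * e t) t)
    (hi : ∀ t, HasDerivAt i (σ * e t - φi * i t) t)
    (hr : ∀ t, HasDerivAt r (φi * i t + φe * e t) t)
    (hs0 : 0 ≤ s 0) (he0 : 0 ≤ e 0) (hi0 : 0 ≤ i 0) (hr0 : 0 ≤ r 0) :
    ∀ t : ℝ, 0 ≤ t → 0 ≤ s t ∧ 0 ≤ e t ∧ 0 ≤ i t ∧ 0 ≤ r t :=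
  seir_ode_nonneg_general s e i r A n₀ nbar βe βi σ φe φi hσ hφe hφi hβi hc hs he hi hr hs0 he0 hi0
    hr0
end

section
/- Let f, g : [0,T] → ℝ be differentiable with f' = σ g - φ f, g' = -(σ + φₑ) g + h(t) with h(t) ≥ 0, σ, φ, φₑ ≥ 0, and f(0) = g(0) = 0. Then f(t) ≥ 0 and g(t) ≥ 0 for all t ∈ [0,T]. -/
/-! Both equations have the form `u' + k u = (nonnegative source)` with `u(0) = 0`.
Multiplying by the integrating factor `exp (k t)` turns this into `(exp (k t) u)' ≥ 0`, so
`exp (k t) u(t) ≥ u(0) = 0`. Applied to `g` with `k = σ + φe` and source `h`, then to `f` with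
`k = φ` and source `σ g ≥ 0`, this gives the claim. -/

open Set Real

section IntegratingFactor

variable {a b k : ℝ} {u u' : ℝ → ℝ}

theorem monotoneOn_exp_mul_of_deriv_add_mul_nonneg (hc : ContinuousOn u (Icc a b))
    (hu : ∀ t ∈ Ioo a b, HasDerivAt u (u' t) t)
    (hineq : ∀ t ∈ Ioo a b, 0 ≤ u' t + k * u t) :
    MonotoneOn (fun t => exp (k * t) * u t) (Icc a b) := by
  have hderiv : ∀ t ∈ Ioo a b,
      HasDerivAt (fun t => exp (k * t) * u t) (exp (k * t) * (u' t + k * u t)) t := by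
    intro t ht
    have hexp : HasDerivAt (fun t => exp (k * t)) (exp (k * t) * k) t := by
      simpa [mul_comm] using ((hasDerivAt_id t).const_mul k).exp
    have hprod : HasDerivAt (fun t => exp (k * t) * u t)
        (exp (k * t) * k * u t + exp (k * t) * u' t) t := hexp.mul (hu t ht)
    convert hprod using 1
    ring
  have hcont : ContinuousOn (fun t => exp (k * t) * u t) (Icc a b) :=
    (continuous_exp.comp (continuous_const.mul continuous_id)).continuousOn.mul hc
  refine monotoneOn_of_hasDerivWithinAt_nonneg (f' := fun t => exp (k * t) * (u' t + k * u t))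
    (convex_Icc a b) hcont
    (fun t ht => ?_) (fun t ht => ?_)
  · rw [interior_Icc] at ht ⊢
    exact (hderiv t ht).hasDerivWithinAt
  · rw [interior_Icc] at ht
    exact mul_nonneg (exp_pos _).le (hineq t ht)

theorem nonneg_of_deriv_add_mul_nonneg (hc : ContinuousOn u (Icc a b))
    (hu : ∀ t ∈ Ioo a b, HasDerivAt u (u' t) t)
    (hineq : ∀ t ∈ Ioo a b, 0 ≤ u' t + k * u t)
    (ha : 0 ≤ u a) : ∀ t ∈ Icc a b, 0 ≤ u t := by
  intro t ht
  have hmono := monotoneOn_exp_mul_of_deriv_add_mul_nonneg hc hu hineq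
    (left_mem_Icc.2 (ht.1.trans ht.2)) ht ht.1
  have hstart : 0 ≤ exp (k * a) * u a := mul_nonneg (exp_pos _).le ha
  exact nonneg_of_mul_nonneg_right (hstart.trans hmono) (exp_pos _)

end IntegratingFactor

theorem positivity_propagation_general
    (T : ℝ) (f g h : ℝ → ℝ) (σ φ φe : ℝ)
    (hσ : 0 ≤ σ)
    (hf : ∀ t ∈ Set.Icc 0 T, HasDerivAt f (σ * g t - φ * f t) t)
    (hg : ∀ t ∈ Set.Icc 0 T, HasDerivAt g (-(σ + φe) * g t + h t) t)
    (hh : ∀ t ∈ Set.Icc 0 T, 0 ≤ h t)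
    (hf0 : f 0 = 0) (hg0 : g 0 = 0) :
    ∀ t ∈ Set.Icc 0 T, 0 ≤ f t ∧ 0 ≤ g t := by
  have hg_nonneg : ∀ t ∈ Icc 0 T, 0 ≤ g t := by
    refine nonneg_of_deriv_add_mul_nonneg (k := σ + φe)
      (fun t ht => (hg t ht).continuousAt.continuousWithinAt)
      (fun t ht => hg t (Ioo_subset_Icc_self ht)) (fun t ht => ?_) hg0.ge
    linarith [hh t (Ioo_subset_Icc_self ht)]
  have hf_nonneg : ∀ t ∈ Icc 0 T, 0 ≤ f t := by
    refine nonneg_of_deriv_add_mul_nonneg (k := φ)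
      (fun t ht => (hf t ht).continuousAt.continuousWithinAt)
      (fun t ht => hf t (Ioo_subset_Icc_self ht)) (fun t ht => ?_) hf0.ge
    have := mul_nonneg hσ (hg_nonneg t (Ioo_subset_Icc_self ht))
    linarith
  exact fun t ht => ⟨hf_nonneg t ht, hg_nonneg t ht⟩

theorem positivity_propagation
    (T : ℝ) (hT : 0 ≤ T) (f g h : ℝ → ℝ) (σ φ φe : ℝ)
    (hσ : 0 ≤ σ) (hφ : 0 ≤ φ) (hφe : 0 ≤ φe)
    (hf : ∀ t ∈ Set.Icc 0 T, HasDerivAt f (σ * g t - φ * f t) t)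
    (hg : ∀ t ∈ Set.Icc 0 T, HasDerivAt g (-(σ + φe) * g t + h t) t)
    (hh : ∀ t ∈ Set.Icc 0 T, 0 ≤ h t)
    (hf0 : f 0 = 0) (hg0 : g 0 = 0) :
    ∀ t ∈ Set.Icc 0 T, 0 ≤ f t ∧ 0 ≤ g t :=
  positivity_propagation_general T f g h σ φ φe hσ hf hg hh hf0 hg0
end
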